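/- arXiv:2601.17928 — 7 statements merged into one kernel-verified Lean document; each statement's English description precedes it below -/
import Mathlib

section
/- Let Q be a quandle. For every x ∈ Q, the image φ_Q(x) has infinite order in the enveloping group G(Q); consequently, if Q is nonempty, then G(Q) is an infinite group. -/
/-!
Send every element of a rack to the generator of the infinite cyclic group: this constant map
into the conjugation quandle of `Multiplicative ℤ` is a rack homomorphism, since `q ◃ q = q` in
any quandle. By the universal property of `G(Q)` it extends to a group homomorphism
`G(Q) →* Multiplicative ℤ` sending each `φ_Q x` to the generator, which has infinite order;
hence so does `φ_Q x`.
-/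

open Quandles

def ShelfHom.const (S : Type*) [Shelf S] {Q : Type*} [Quandle Q] (q : Q) : S →◃ Q where
  toFun _ := q
  map_act' := Quandle.fix.symm

theorem Rack.toEnvelGroup.map_const_apply {R : Type*} [Rack R] {G : Type*} [Group G] (g : G)
    (x : R) :
    toEnvelGroup.map (ShelfHom.const R (g : Quandle.Conj G)) (toEnvelGroup R x) = g :=
  DFunLike.congr_fun (toEnvelGroup.univ R G (ShelfHom.const R (g : Quandle.Conj G))) x

theorem Rack.not_isOfFinOrder_toEnvelGroup {R : Type*} [Rack R] (x : R) :
    ¬ IsOfFinOrder (toEnvelGroup R x : EnvelGroup R) := by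
  intro hx
  have hgen := (toEnvelGroup.map
    (ShelfHom.const R (Multiplicative.ofAdd 1 : Quandle.Conj (Multiplicative ℤ)))).isOfFinOrder hx
  rw [toEnvelGroup.map_const_apply] at hgen
  exact not_isOfFinOrder_of_isMulTorsionFree (by decide) hgen

/-- For a quandle `Q`, every `φ_Q x` has infinite order in the enveloping
group `G(Q)`, and consequently `G(Q)` is infinite whenever `Q` is nonempty. -/
theorem envelGroup_image_infinite_order (Q : Type) [Quandle Q] :
    (∀ x : Q, ¬ IsOfFinOrder (Rack.toEnvelGroup Q x : Rack.EnvelGroup Q)) ∧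
      (Nonempty Q → Infinite (Rack.EnvelGroup Q)) :=
  ⟨Rack.not_isOfFinOrder_toEnvelGroup, fun ⟨x⟩ => not_finite_iff_infinite.mp fun _ =>
    Rack.not_isOfFinOrder_toEnvelGroup x (isOfFinOrder_of_finite _)⟩
end

section
/- Let Q be a quandle containing elements x, y with x ▷ y = y and y ▷ x ≠ x. Then φ_Q(x) = φ_Q(y ▷ x) in the enveloping group G(Q); in particular the canonical map φ_Q : Q → G(Q) is not injective. -/
open Quandles

theorem Rack.toEnvelGroup_act {R : Type*} [Rack R] (a b : R) :
    (toEnvelGroup R (a ◃ b) : EnvelGroup R) =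
      toEnvelGroup R a * toEnvelGroup R b * (toEnvelGroup R a)⁻¹ :=
  (toEnvelGroup R).map_act

/-- In the enveloping group `x ◃ y = y` says that `φ x` and `φ y` commute, so conjugating `φ x`
by `φ y` is trivial there even when `y ◃ x ≠ x` in `R`. -/
theorem Rack.toEnvelGroup_act_eq_of_act_eq {R : Type*} [Rack R] {x y : R} (h : x ◃ y = y) :
    (toEnvelGroup R (y ◃ x) : EnvelGroup R) = toEnvelGroup R x := by
  have hconj : toEnvelGroup R x * toEnvelGroup R y * (toEnvelGroup R x)⁻¹ = toEnvelGroup R y := by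
    rw [← toEnvelGroup_act, h]
  have hcomm : Commute (toEnvelGroup R x : EnvelGroup R) (toEnvelGroup R y) :=
    mul_inv_eq_iff_eq_mul.mp hconj
  rw [toEnvelGroup_act, hcomm.symm.eq, mul_inv_cancel_right]

/-- If a quandle `Q` has elements `x, y` with `x ◃ y = y` and `y ◃ x ≠ x`,
then `φ_Q x = φ_Q (y ◃ x)` in `G(Q)`; in particular `φ_Q` is not injective. -/
theorem toEnvelGroup_not_injective (Q : Type) [Quandle Q] (x y : Q)
    (h1 : x ◃ y = y) (h2 : y ◃ x ≠ x) :
    (Rack.toEnvelGroup Q x : Rack.EnvelGroup Q) = Rack.toEnvelGroup Q (y ◃ x) ∧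
      ¬ Function.Injective (Rack.toEnvelGroup Q) := by
  have heq := Rack.toEnvelGroup_act_eq_of_act_eq h1
  exact ⟨heq.symm, fun hinj => h2 (hinj heq)⟩
end

section
/- Let Q be a quandle and let Q_conj denote the image φ_Q(Q) ⊆ G(Q), regarded as a quandle under conjugation a ▷ b = a b a⁻¹. Let θ_Q : Q → Q_conj be the surjection x ↦ φ_Q(x). Then the induced group homomorphism G(θ_Q) : G(Q) → G(Q_conj), determined by G(θ_Q)(φ_Q(x)) = φ_{Q_conj}(θ_Q(x)) for all x ∈ Q, is a group isomorphism. -/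
open Quandles

/-- The image quandle `Q_conj = φ_Q(Q) ⊆ G(Q)`. -/
def QConj (Q : Type) [Quandle Q] : Type :=
  {g : Rack.EnvelGroup Q // ∃ x : Q, (Rack.toEnvelGroup Q x : Rack.EnvelGroup Q) = g}

/-- `Q_conj` is a quandle under conjugation `a ▷ b = a * b * a⁻¹` in `G(Q)`. -/
instance (Q : Type) [Quandle Q] : Quandle (QConj Q) where
  act a b := ⟨a.1 * b.1 * a.1⁻¹, by
    obtain ⟨x, hx⟩ := a.2
    obtain ⟨y, hy⟩ := b.2
    refine ⟨x ◃ y, ?_⟩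
    rw [← hx, ← hy]
    exact (Rack.toEnvelGroup Q).map_act⟩
  self_distrib := by
    intro a b c
    apply Subtype.ext
    show a.1 * (b.1 * c.1 * b.1⁻¹) * a.1⁻¹ =
      (a.1 * b.1 * a.1⁻¹) * (a.1 * c.1 * a.1⁻¹) * (a.1 * b.1 * a.1⁻¹)⁻¹
    group
  invAct a b := ⟨a.1⁻¹ * b.1 * a.1, by
    obtain ⟨x, hx⟩ := a.2
    obtain ⟨y, hy⟩ := b.2
    refine ⟨x ◃⁻¹ y, ?_⟩
    have h : (Rack.toEnvelGroup Q) (x ◃ (x ◃⁻¹ y)) =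
        (Rack.toEnvelGroup Q x : Rack.EnvelGroup Q) * (Rack.toEnvelGroup Q (x ◃⁻¹ y)) *
          (Rack.toEnvelGroup Q x : Rack.EnvelGroup Q)⁻¹ := (Rack.toEnvelGroup Q).map_act
    rw [Rack.right_inv] at h
    rw [← hx, ← hy, h]
    group⟩
  left_inv := by
    intro a b
    apply Subtype.ext
    show a.1⁻¹ * (a.1 * b.1 * a.1⁻¹) * a.1 = b.1
    group
  right_inv := by
    intro a b
    apply Subtype.ext
    show a.1 * (a.1⁻¹ * b.1 * a.1) * a.1⁻¹ = b.1
    group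
  fix := by
    intro a
    apply Subtype.ext
    show a.1 * a.1 * a.1⁻¹ = a.1
    group

/-! The inclusion `Q_conj ⊆ Conj G(Q)` is a quandle morphism, so it induces a homomorphism
`G(Q_conj) → G(Q)`. Both composites with `G(θ_Q)` fix the generators (for `G(Q_conj)` because
`θ_Q` is surjective), hence are the identity. -/

namespace Rack

theorem EnvelGroup.hom_ext {R G : Type*} [Rack R] [Group G] {g₁ g₂ : EnvelGroup R →* G}
    (h : ∀ x : R, g₁ (toEnvelGroup R x) = g₂ (toEnvelGroup R x)) : g₁ = g₂ :=
  toEnvelGroup.map.symm.injective (ShelfHom.ext (funext h))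

end Rack

namespace QConj

open Rack

variable (Q : Type) [Quandle Q]

def theta : Q →◃ QConj Q where
  toFun x := ⟨toEnvelGroup Q x, x, rfl⟩
  map_act' := Subtype.ext (toEnvelGroup Q).map_act

def incl : QConj Q →◃ Quandle.Conj (EnvelGroup Q) where
  toFun := Subtype.val
  map_act' := rfl

def envelGroupEquiv : EnvelGroup Q ≃* EnvelGroup (QConj Q) :=
  MonoidHom.toMulEquiv (toEnvelGroup.map ((toEnvelGroup (QConj Q)).comp (theta Q)))
    (toEnvelGroup.map (incl Q))
    (EnvelGroup.hom_ext fun _ => rfl)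
    (EnvelGroup.hom_ext fun ⟨_, _, rfl⟩ => rfl)

theorem envelGroupEquiv_toEnvelGroup (x : Q) :
    envelGroupEquiv Q (toEnvelGroup Q x) = toEnvelGroup (QConj Q) (theta Q x) :=
  rfl

end QConj

/-- the group homomorphism `G(θ_Q) : G(Q) → G(Q_conj)` determined by
`G(θ_Q)(φ_Q x) = φ_{Q_conj}(θ_Q x)` is an isomorphism. -/
theorem envelGroup_iso_envelGroup_qconj (Q : Type) [Quandle Q] :
    ∃ h : Rack.EnvelGroup Q →* Rack.EnvelGroup (QConj Q),
      (∀ x : Q, h (Rack.toEnvelGroup Q x) =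
        Rack.toEnvelGroup (QConj Q) ⟨Rack.toEnvelGroup Q x, x, rfl⟩) ∧
      Function.Bijective h :=
  ⟨(QConj.envelGroupEquiv Q).toMonoidHom, QConj.envelGroupEquiv_toEnvelGroup Q,
    (QConj.envelGroupEquiv Q).bijective⟩
end

section
/- Let Q be an injective quandle, i.e. φ_Q : Q → G(Q) is injective. Then there is a surjective group homomorphism h : G(Q) → Inn(Q) satisfying h(φ_Q(x)) = L_x for all x ∈ Q, and the kernel of h is exactly the center of G(Q). In particular G(Q) is a central extension of Inn(Q). -/
/-!
Conjugation by `g` in `G(Q)` moves each generator `φ_Q x` to `φ_Q (g • x)`, where `g` acts on `Q`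
through `Inn(Q)`. Since the `φ_Q x` generate `G(Q)`, `g` is central iff it fixes all of them under
conjugation, which by injectivity of `φ_Q` means that `g` acts trivially on `Q`.
-/

open Quandles

/-- The group `Inn(Q)` of inner automorphisms of a quandle `Q`: the subgroup of the
permutation group of `Q` generated by the left translations `L_x : y ↦ x ◃ y`. -/
def quandleInn (Q : Type) [Quandle Q] : Subgroup (Equiv.Perm Q) :=
  Subgroup.closure (Set.range fun x : Q => (Rack.act' x : Equiv.Perm Q))

namespace Rack

variable {R : Type*} [Rack R]

theorem closure_range_toEnvelGroup :
    Subgroup.closure (Set.range fun x : R => (toEnvelGroup R x : EnvelGroup R)) = ⊤ := by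
  refine eq_top_iff.mpr fun g _ => Quotient.inductionOn g fun a => ?_
  induction a with
  | unit => exact Subgroup.one_mem _
  | incl x => exact Subgroup.subset_closure ⟨x, rfl⟩
  | mul a b iha ihb => exact Subgroup.mul_mem _ iha ihb
  | inv a iha => exact Subgroup.inv_mem _ iha

theorem range_envelAction :
    (envelAction : EnvelGroup R →* R ≃ R).range = Subgroup.closure (Set.range act') := by
  rw [MonoidHom.range_eq_map, ← closure_range_toEnvelGroup, MonoidHom.map_closure,
    ← Set.range_comp]
  rfl

theorem mul_toEnvelGroup_mul_inv (g : EnvelGroup R) (x : R) :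
    g * toEnvelGroup R x * g⁻¹ = toEnvelGroup R (envelAction g x) := by
  have hg : g ∈ Subgroup.closure (Set.range fun y : R => (toEnvelGroup R y : EnvelGroup R)) :=
    closure_range_toEnvelGroup.ge (Subgroup.mem_top g)
  induction hg using Subgroup.closure_induction generalizing x with
  | mem g hg =>
    obtain ⟨y, rfl⟩ := hg
    exact ((toEnvelGroup R).map_act' (x := y) (y := x)).symm
  | one => simp
  | mul a b _ _ iha ihb =>
    rw [map_mul, Equiv.Perm.mul_apply, ← iha, ← ihb]
    group
  | inv g _ ih =>
    have hx := ih (envelAction g⁻¹ x)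
    rw [← Equiv.Perm.mul_apply, ← map_mul, mul_inv_cancel, map_one, Equiv.Perm.one_apply] at hx
    rw [← hx]
    group

theorem ker_envelAction (hinj : Function.Injective (toEnvelGroup R)) :
    (envelAction : EnvelGroup R →* R ≃ R).ker = Subgroup.center (EnvelGroup R) := by
  ext g
  rw [← Subgroup.centralizer_univ, ← Subgroup.coe_top, ← closure_range_toEnvelGroup,
    Subgroup.centralizer_closure, Subgroup.mem_centralizer_iff, Set.forall_mem_range,
    MonoidHom.mem_ker, Equiv.ext_iff]
  refine forall_congr' fun x => ?_
  rw [← hinj.eq_iff, ← mul_toEnvelGroup_mul_inv, mul_inv_eq_iff_eq_mul, eq_comm]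
  rfl

end Rack

/-- for an injective quandle `Q`, there is a surjective group homomorphism
`h : G(Q) → Inn(Q)` with `h (φ_Q x) = L_x` whose kernel is exactly the center of `G(Q)`. -/
theorem envelGroup_central_extension_of_inn (Q : Type) [Quandle Q]
    (hinj : Function.Injective (Rack.toEnvelGroup Q)) :
    ∃ h : Rack.EnvelGroup Q →* quandleInn Q,
      Function.Surjective h ∧
      (∀ x : Q, h (Rack.toEnvelGroup Q x) =
        ⟨(Rack.act' x : Equiv.Perm Q), Subgroup.subset_closure ⟨x, rfl⟩⟩) ∧
      h.ker = Subgroup.center (Rack.EnvelGroup Q) := by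
  have hrange : (Rack.envelAction : Rack.EnvelGroup Q →* Equiv.Perm Q).range = quandleInn Q :=
    Rack.range_envelAction
  refine ⟨Rack.envelAction.codRestrict _ fun g => hrange ▸ ⟨g, rfl⟩, ?_, fun x => rfl, ?_⟩
  · rintro ⟨p, hp⟩
    obtain ⟨g, rfl⟩ := hrange ▸ hp
    exact ⟨g, rfl⟩
  · rw [MonoidHom.ker_codRestrict, Rack.ker_envelAction hinj]
end

section
/- Let G be a countable group whose center has finite index in G. Then every irreducible representation of G on a complex vector space V (V ≠ 0 and the only ρ(G)-invariant subspaces of V are 0 and V) is finite dimensional. -/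
/-!
Dixmier's version of Schur's lemma: an irreducible representation of a countable group has
countable dimension, being spanned by one orbit. If an intertwiner `T` had empty spectrum, the
vectors `(T - μ)⁻¹ v`, `μ ∈ ℂ`, would be linearly independent (a relation among them becomes a
nonzero polynomial in `T` killing `v`), giving continuum many independent vectors. So every
intertwiner is a scalar; in particular the center acts by scalars, and then the translates of
one nonzero vector by coset representatives of the center span `V`.
-/

open Polynomial Cardinal

universe u v

theorem spectrum.isUnit_aeval_of_eq_empty {K A : Type*} [Field K] [IsAlgClosed K] [Ring A]
    [Algebra K A] {a : A} (ha : spectrum K a = ∅) {p : K[X]} (hp : p ≠ 0) :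
    IsUnit (aeval a p) := by
  rcases le_or_gt p.degree 0 with hdeg | hdeg
  · rw [eq_C_of_degree_le_zero hdeg, aeval_C]
    refine (IsUnit.mk0 _ fun h0 => hp ?_).map (algebraMap K A)
    rw [eq_C_of_degree_le_zero hdeg, h0, C_0]
  · by_contra h
    rw [← spectrum.zero_mem_iff K, spectrum.map_polynomial_aeval_of_degree_pos a p hdeg, ha,
      Set.image_empty] at h
    exact h

theorem Module.End.linearIndependent_inverse_sub_apply {K V : Type*} [Field K] [AddCommGroup V]
    [Module K V] {T : Module.End K V} (hT : ∀ p : K[X], p ≠ 0 → IsUnit (aeval T p)) {v : V}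
    (hv : v ≠ 0) : LinearIndependent K fun μ : K => Ring.inverse (T - algebraMap K _ μ) v := by
  classical
  rw [linearIndependent_iff']
  intro s c hsum i hi
  have hcancel : ∀ μ ∈ s, aeval T (Lagrange.nodal s id) (Ring.inverse (T - algebraMap K _ μ) v)
      = aeval T (Lagrange.nodal (s.erase μ) id) v := by
    intro μ hμ
    have hunit : IsUnit (T - algebraMap K _ μ) := by
      simpa using hT (X - C μ) (X_sub_C_ne_zero μ)
    rw [Lagrange.nodal_eq_mul_nodal_erase hμ, mul_comm, map_mul, Module.End.mul_apply,
      map_sub, aeval_X, aeval_C, id, ← Module.End.mul_apply (T - _),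
      Ring.mul_inverse_cancel _ hunit, Module.End.one_apply]
  -- the relation with its denominators cleared by `∏ ν ∈ s, (X - ν)`
  set q : K[X] := ∑ μ ∈ s, C (c μ) * Lagrange.nodal (s.erase μ) id
  have hqT : aeval T q v = 0 := by
    calc aeval T q v
        = aeval T (Lagrange.nodal s id)
            (∑ μ ∈ s, c μ • Ring.inverse (T - algebraMap K _ μ) v) := by
          simp only [q, map_sum, map_mul, aeval_C, LinearMap.sum_apply, Module.End.mul_apply,
            Module.algebraMap_end_apply, map_smul]
          exact Finset.sum_congr rfl fun μ hμ => by rw [hcancel μ hμ]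
      _ = 0 := by rw [hsum, map_zero]
  have hq : q = 0 := by
    by_contra hq
    exact hv ((Module.End.isUnit_iff _).mp (hT q hq) |>.injective (by rw [hqT, map_zero]))
  have hqi : q.eval i = c i * (Lagrange.nodal (s.erase i) id).eval i := by
    rw [eval_finsetSum, Finset.sum_eq_single_of_mem i hi]
    · rw [eval_mul, eval_C]
    · intro μ _ hμi
      exact eval_mul.trans <| mul_eq_zero_of_right _ <|
        Lagrange.eval_nodal_at_node (v := id) (Finset.mem_erase.mpr ⟨hμi.symm, hi⟩)
  have hnode : (Lagrange.nodal (s.erase i) id).eval i ≠ 0 :=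
    Lagrange.eval_nodal_not_at_node fun μ hμ => (Finset.ne_of_mem_erase hμ).symm
  simpa [hq, hnode] using hqi

theorem Module.End.spectrum_nonempty_of_rank_lt {K : Type u} {V : Type v} [Field K]
    [IsAlgClosed K] [AddCommGroup V] [Module K V] [Nontrivial V]
    (hV : lift.{u} (Module.rank K V) < lift.{v} #K)
    (T : Module.End K V) : (spectrum K T).Nonempty := by
  rw [Set.nonempty_iff_ne_empty]
  intro hT
  obtain ⟨v, hv⟩ := exists_ne (0 : V)
  exact hV.not_ge (linearIndependent_inverse_sub_apply
    (fun _ hp => spectrum.isUnit_aeval_of_eq_empty hT hp) hv).cardinal_lift_le_rank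

section Representation

variable {K : Type u} {G : Type*} {V : Type v} [Field K] [Group G] [AddCommGroup V] [Module K V]

/-- `V ≠ 0` is not part of this condition. -/
def IsIrreducibleRep (ρ : G →* V ≃ₗ[K] V) : Prop :=
  ∀ W : Submodule K V, (∀ (g : G) (v : V), v ∈ W → ρ g v ∈ W) → W = ⊥ ∨ W = ⊤

namespace IsIrreducibleRep

variable {ρ : G →* V ≃ₗ[K] V}

theorem span_eq_top (hρ : IsIrreducibleRep ρ) {S : Set V}
    (hS : ∀ g : G, ∀ x ∈ S, ρ g x ∈ Submodule.span K S) (h0 : ∃ x ∈ S, x ≠ 0) :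
    Submodule.span K S = ⊤ := by
  have hinv : ∀ (g : G) (x : V), x ∈ Submodule.span K S → ρ g x ∈ Submodule.span K S := by
    intro g x hx
    have hmap : (Submodule.span K S).map (ρ g : V →ₗ[K] V) ≤ Submodule.span K S := by
      rw [Submodule.map_span, Submodule.span_le]
      rintro _ ⟨y, hy, rfl⟩
      exact hS g y hy
    exact hmap ⟨x, hx, rfl⟩
  refine (hρ _ hinv).resolve_left fun hbot => ?_
  obtain ⟨x, hxS, hx⟩ := h0
  exact hx ((Submodule.mem_bot K).mp (hbot ▸ Submodule.subset_span hxS))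

theorem span_orbit_eq_top (hρ : IsIrreducibleRep ρ) {v : V} (hv : v ≠ 0) :
    Submodule.span K (Set.range fun g : G => ρ g v) = ⊤ :=
  hρ.span_eq_top (by rintro g _ ⟨h, rfl⟩; exact Submodule.subset_span ⟨g * h, by simp⟩)
    ⟨v, ⟨1, by simp⟩, hv⟩

theorem rank_le_aleph0 [Countable G] [Nontrivial V] (hρ : IsIrreducibleRep ρ) :
    Module.rank K V ≤ ℵ₀ := by
  obtain ⟨v, hv⟩ := exists_ne (0 : V)
  rw [← rank_top, ← hρ.span_orbit_eq_top hv]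
  exact (rank_span_le _).trans (Set.countable_range _).le_aleph0

theorem isUnit_or_eq_zero_of_commute (hρ : IsIrreducibleRep ρ) {T : Module.End K V}
    (hT : ∀ g, Commute T (ρ g : Module.End K V)) : IsUnit T ∨ T = 0 := by
  have hT' : ∀ g x, T (ρ g x) = ρ g (T x) := fun g x => LinearMap.congr_fun (hT g) x
  rcases hρ (LinearMap.ker T) fun g x hx => by rw [LinearMap.mem_ker, hT', hx, map_zero] with
    hker | hker
  · rcases hρ (LinearMap.range T) (by rintro g _ ⟨x, rfl⟩; exact ⟨ρ g x, hT' g x⟩) with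
      hran | hran
    · exact Or.inr (LinearMap.range_eq_bot.mp hran)
    · exact Or.inl ((Module.End.isUnit_iff T).mpr
        ⟨LinearMap.ker_eq_bot.mp hker, LinearMap.range_eq_top.mp hran⟩)
  · exact Or.inr (LinearMap.ker_eq_top.mp hker)

theorem exists_eq_algebraMap_of_commute [IsAlgClosed K] [Nontrivial V]
    (hV : lift.{u} (Module.rank K V) < lift.{v} #K) (hρ : IsIrreducibleRep ρ)
    {T : Module.End K V} (hT : ∀ g, Commute T (ρ g : Module.End K V)) :
    ∃ c : K, T = algebraMap K _ c := by
  obtain ⟨c, hc⟩ := Module.End.spectrum_nonempty_of_rank_lt hV T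
  have hcomm : ∀ g, Commute (algebraMap K _ c - T) (ρ g : Module.End K V) :=
    fun g => (Algebra.commute_algebraMap_left c _).sub_left (hT g)
  refine ⟨c, ?_⟩
  rw [eq_comm, ← sub_eq_zero]
  exact (hρ.isUnit_or_eq_zero_of_commute hcomm).resolve_left (spectrum.mem_iff.mp hc)

theorem exists_smul_of_mem_center [IsAlgClosed K] [Nontrivial V]
    (hV : lift.{u} (Module.rank K V) < lift.{v} #K) (hρ : IsIrreducibleRep ρ)
    {z : G} (hz : z ∈ Subgroup.center G) : ∃ c : K, ∀ x : V, ρ z x = c • x := by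
  have hT : ∀ g, Commute (ρ z : Module.End K V) (ρ g : Module.End K V) := fun g =>
    Commute.map (Subgroup.mem_center_iff.mp hz g).symm
      (LinearEquiv.automorphismGroup.toLinearMapMonoidHom.comp ρ)
  obtain ⟨c, hc⟩ := hρ.exists_eq_algebraMap_of_commute hV hT
  exact ⟨c, fun x => LinearMap.congr_fun hc x⟩

theorem finiteDimensional_of_finiteIndex_of_smul [Nontrivial V] (hρ : IsIrreducibleRep ρ)
    (H : Subgroup G) [H.FiniteIndex] (hH : ∀ h ∈ H, ∃ c : K, ∀ x : V, ρ h x = c • x) :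
    FiniteDimensional K V := by
  obtain ⟨v, hv⟩ := exists_ne (0 : V)
  set S := Set.range fun q : G ⧸ H => ρ q.out v
  have hS : ∀ g : G, ∀ x ∈ S, ρ g x ∈ Submodule.span K S := by
    rintro g _ ⟨q, rfl⟩
    obtain ⟨h, hh⟩ := QuotientGroup.mk_out_eq_mul H (g * q.out)
    obtain ⟨c, hc⟩ := hH _ (inv_mem h.2)
    have hcoset : ρ g (ρ q.out v) = c • ρ (QuotientGroup.mk (g * q.out) : G ⧸ H).out v := by
      calc ρ g (ρ q.out v)
          = ρ ((QuotientGroup.mk (g * q.out) : G ⧸ H).out * (h : G)⁻¹) v := by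
            rw [hh, mul_inv_cancel_right, map_mul, LinearEquiv.mul_apply]
        _ = c • ρ (QuotientGroup.mk (g * q.out) : G ⧸ H).out v := by
            rw [map_mul, LinearEquiv.mul_apply, hc, map_smul]
    rw [hcoset]
    exact Submodule.smul_mem _ c (Submodule.subset_span ⟨_, rfl⟩)
  have h0 : ∃ x ∈ S, x ≠ 0 := ⟨_, ⟨QuotientGroup.mk 1, rfl⟩, (ρ _).map_ne_zero_iff.mpr hv⟩
  exact Module.finite_def.mpr
    (Submodule.fg_def.mpr ⟨S, Set.finite_range _, hρ.span_eq_top hS h0⟩)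

end IsIrreducibleRep

end Representation

/-- if `G` is a countable group whose center has finite index, then every
irreducible representation of `G` on a complex vector space is finite dimensional. -/
theorem irreducible_rep_finiteDimensional_of_center_finiteIndex (G : Type) [Group G]
    [Countable G] (hZ : (Subgroup.center G).FiniteIndex)
    (V : Type) [AddCommGroup V] [Module ℂ V] [Nontrivial V]
    (ρ : G →* (V ≃ₗ[ℂ] V))
    (hirr : ∀ W : Submodule ℂ V, (∀ (g : G) (v : V), v ∈ W → ρ g v ∈ W) → W = ⊥ ∨ W = ⊤) :
    FiniteDimensional ℂ V := by
  have hρ : IsIrreducibleRep ρ := hirr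
  have hV : lift.{0} (Module.rank ℂ V) < lift.{0} #ℂ := by
    rw [lift_id, lift_id, mk_complex]
    exact hρ.rank_le_aleph0.trans_lt aleph0_lt_continuum
  exact hρ.finiteDimensional_of_finiteIndex_of_smul (Subgroup.center G)
    fun z hz => hρ.exists_smul_of_mem_center hV hz
end

section
/- Let Q be a finite quandle, G a uniquely divisible group (for every integer n ≥ 1 the map g ↦ gⁿ is a bijection of G), and f : Q → Conj(G) a quandle morphism. Then the image of f is a trivial quandle, i.e. f(x) f(y) f(x)⁻¹ = f(y) for all x, y ∈ Q. -/
/-!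
For `x ∈ Q` the permutation `y ↦ x ◃ y` of the finite set `Q` has some finite order `n ≥ 1`,
and `f` intertwines it with conjugation by `f x`. Hence conjugation by `f x ^ n` fixes every
`f y`, i.e. `f x ^ n` commutes with `f y`. Conjugating by `f y` then shows that `f x` and
`f y * f x * (f y)⁻¹` have the same `n`-th power, so they are equal by uniqueness of `n`-th roots.
-/

open Quandles

theorem Commute.of_pow_left_of_injective {G : Type*} [Group G] {n : ℕ}
    (hn : Function.Injective fun g : G => g ^ n) {a b : G} (h : Commute (a ^ n) b) :
    Commute a b := by
  have hconj : b * a * b⁻¹ = a := hn <| by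
    simp only [conj_pow]
    exact h.symm.mul_inv_cancel
  exact (mul_inv_eq_iff_eq_mul.mp hconj).symm

theorem Rack.map_act'_pow_apply {R G : Type*} [Rack R] [Group G] {f : R → G}
    (hf : ∀ x y : R, f (x ◃ y) = f x * f y * (f x)⁻¹) (x y : R) (k : ℕ) :
    f ((Rack.act' x ^ k) y) = f x ^ k * f y * (f x ^ k)⁻¹ := by
  induction k with
  | zero => simp
  | succ k ih =>
    rw [pow_succ', Equiv.Perm.mul_apply, Rack.act'_apply, hf, ih]
    group

/-- if `Q` is a finite quandle, `G` is a uniquely divisible group and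
`f : Q → Conj G` is a quandle morphism, then the image of `f` is a trivial quandle:
`f x * f y * (f x)⁻¹ = f y` for all `x, y`. -/
theorem quandle_morphism_to_uniquely_divisible_trivial (Q : Type) [Quandle Q] [Fintype Q]
    (G : Type) [Group G]
    (hdiv : ∀ n : ℕ, 1 ≤ n → Function.Bijective fun g : G => g ^ n)
    (f : Q → G) (hf : ∀ x y : Q, f (x ◃ y) = f x * f y * (f x)⁻¹) :
    ∀ x y : Q, f x * f y * (f x)⁻¹ = f y := by
  intro x y
  set n := orderOf (Rack.act' x)
  have hpow : Commute (f x ^ n) (f y) := by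
    have h := Rack.map_act'_pow_apply hf x y n
    rw [pow_orderOf_eq_one, Equiv.Perm.one_apply] at h
    exact mul_inv_eq_iff_eq_mul.mp h.symm
  exact (hpow.of_pow_left_of_injective (hdiv n (orderOf_pos _)).injective).mul_inv_cancel
end

section
/- Let Q be a nonempty indecomposable quandle, i.e. the action of Inn(Q) on Q is transitive. Then for every nilpotent group G, every quandle morphism f : Q → Conj(G) is constant. -/
/-
Induct on the nilpotency class. Composing `f` with `G → G ⧸ Z(G)` gives a morphism into a group
of smaller class, which is constant by induction; so any two values of `f` differ by a central
element and therefore commute. Then `f (x ◃ y) = f x * f y * (f x)⁻¹ = f y`, i.e. `f` is invariant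
under every `L_x`, hence under `Inn(Q)`, and transitivity makes it constant.
-/

open Quandles

section

variable {Q : Type} [Quandle Q] {α : Type*} {f : Q → α}

theorem apply_quandleInn_eq (hf : ∀ x y : Q, f (x ◃ y) = f y) {g : Equiv.Perm Q}
    (hg : g ∈ quandleInn Q) (y : Q) : f (g y) = f y := by
  induction hg using Subgroup.closure_induction generalizing y with
  | mem _ hx => obtain ⟨x, rfl⟩ := hx; exact hf x y
  | one => rfl
  | mul a b _ _ ha hb => exact (ha (b y)).trans (hb y)
  | inv a _ ha => simpa using (ha (a⁻¹ y)).symm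

theorem eq_of_forall_act_eq (htrans : ∀ x y : Q, ∃ g : quandleInn Q, (g : Equiv.Perm Q) x = y)
    (hf : ∀ x y : Q, f (x ◃ y) = f y) (x y : Q) : f x = f y := by
  obtain ⟨g, rfl⟩ := htrans x y
  exact (apply_quandleInn_eq hf g.2 x).symm

end

theorem commute_of_mk_eq_mk_center {G : Type*} [Group G] {a b : G}
    (h : (a : G ⧸ Subgroup.center G) = b) : Commute a b := by
  obtain ⟨z, hz, rfl⟩ := (QuotientGroup.mk'_eq_mk' _).mp h
  exact (Commute.refl a).mul_right (Subgroup.mem_center_iff.mp hz a)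

theorem quandle_morphism_to_nilpotent_constant_general (Q : Type) [Quandle Q]
    (htrans : ∀ x y : Q, ∃ g : quandleInn Q, (g : Equiv.Perm Q) x = y)
    (G : Type) [Group G] [Group.IsNilpotent G]
    (f : Q → G) (hf : ∀ x y : Q, f (x ◃ y) = f x * f y * (f x)⁻¹) :
    ∀ x y : Q, f x = f y := by
  revert f
  refine Group.nilpotent_center_quotient_ind (P := fun G _ _ => ∀ f : Q → G,
    (∀ x y : Q, f (x ◃ y) = f x * f y * (f x)⁻¹) → ∀ x y : Q, f x = f y) G ?_ ?_
  · exact fun G _ _ f _ x y => Subsingleton.elim (f x) (f y)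
  · intro G _ _ ih f hf
    have hquot : ∀ x y : Q, (f x : G ⧸ Subgroup.center G) = f y :=
      ih (fun q => (f q : G ⧸ Subgroup.center G)) fun x y => by simp [hf x y]
    refine eq_of_forall_act_eq htrans fun x y => ?_
    rw [hf, (commute_of_mk_eq_mk_center (hquot x y)).eq, mul_inv_cancel_right]

/-- if `Q` is a nonempty indecomposable quandle (the action of `Inn(Q)`
on `Q` is transitive), then every quandle morphism from `Q` to the conjugation quandle
of a nilpotent group is constant. -/
theorem quandle_morphism_to_nilpotent_constant (Q : Type) [Quandle Q] [Nonempty Q]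
    (htrans : ∀ x y : Q, ∃ g : quandleInn Q, (g : Equiv.Perm Q) x = y)
    (G : Type) [Group G] [Group.IsNilpotent G]
    (f : Q → G) (hf : ∀ x y : Q, f (x ◃ y) = f x * f y * (f x)⁻¹) :
    ∀ x y : Q, f x = f y :=
  quandle_morphism_to_nilpotent_constant_general Q htrans G f hf
end
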